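/- The sandwiched quadratic form satisfies μᵀ R̄ Q̄² R̄ μ = ( (1+δ_R)(1+δ_Q) ‖μ‖ / ((1+γ(1+δ_Q)) λ_R) )² · ( 1 + β² ‖μ‖² ‖μ_β‖² / λ_Q² − 2 β² ‖μ‖² / λ_Q ). -/

import Mathlib

open Matrix

/-- Deterministic equivalent resolvent `((v vᵀ + I_p)/(1+δ) + γ I_p)⁻¹`. -/
noncomputable def detEquivResolvent (p : ℕ) (v : Fin p → ℝ) (δ γ : ℝ) :
    Matrix (Fin p) (Fin p) ℝ :=
  ((1 + δ)⁻¹ • (vecMulVec v v + 1) + γ • (1 : Matrix (Fin p) (Fin p) ℝ))⁻¹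

/-!
Both resolvents are inverses of rank-one perturbations of scalar matrices, so by
Sherman–Morrison `Q̄ = κ_Q (I − μ_β μ_βᵀ / λ_Q)` with `κ_Q = (1+δ_Q)/(1+γ(1+δ_Q))`, and `μ` is an
eigenvector of `R̄` with eigenvalue `(1+δ_R)/λ_R`. As `R̄` and `Q̄` are symmetric, the form equals
`((1+δ_R)/λ_R)² ‖Q̄ μ‖²`, and `Q̄ μ = κ_Q (μ − (β‖μ‖²/λ_Q) μ_β)` because `⟨μ_β, μ⟩ = β‖μ‖²`.
-/

namespace Matrix

variable {n K : Type*} [Fintype n]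

theorem dotProduct_mulVec_of_isSymm [CommSemiring K] {A : Matrix n n K} (hA : A.IsSymm)
    (x y : n → K) : x ⬝ᵥ A *ᵥ y = A *ᵥ x ⬝ᵥ y := by
  rw [dotProduct_mulVec, ← mulVec_transpose, hA.eq]

theorem dotProduct_mul_mul_mul_mulVec_of_isSymm [CommSemiring K] {R Q : Matrix n n K}
    (hR : R.IsSymm) (hQ : Q.IsSymm) {x : n → K} {c : K} (hx : R *ᵥ x = c • x) :
    x ⬝ᵥ (R * Q * Q * R) *ᵥ x = c ^ 2 * (Q *ᵥ x ⬝ᵥ Q *ᵥ x) := by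
  simp only [← mulVec_mulVec, hx, mulVec_smul, dotProduct_mulVec_of_isSymm hR,
    dotProduct_mulVec_of_isSymm hQ, smul_dotProduct, dotProduct_smul, smul_eq_mul]
  ring

variable [DecidableEq n] [Field K]

-- Sherman–Morrison
theorem inv_smul_one_add_smul_vecMulVec {a b : K} (u w : n → K) (ha : a ≠ 0)
    (hab : a + b * (w ⬝ᵥ u) ≠ 0) :
    (a • 1 + b • vecMulVec u w)⁻¹ = a⁻¹ • (1 - (b / (a + b * (w ⬝ᵥ u))) • vecMulVec u w) := by
  refine inv_eq_right_inv ?_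
  have hsq : vecMulVec u w * vecMulVec u w = (w ⬝ᵥ u) • vecMulVec u w := by
    rw [vecMulVec_mul_vecMulVec, vecMulVec_smul]
  have hcoef : a⁻¹ * b - a⁻¹ * (b / (a + b * (w ⬝ᵥ u))) * (a + b * (w ⬝ᵥ u)) = 0 := by
    field_simp
    ring
  calc (a • 1 + b • vecMulVec u w) * (a⁻¹ • (1 - (b / (a + b * (w ⬝ᵥ u))) • vecMulVec u w))
      = (a * a⁻¹) • 1 + (a⁻¹ * b - a⁻¹ * (b / (a + b * (w ⬝ᵥ u))) * (a + b * (w ⬝ᵥ u))) •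
          vecMulVec u w := by
        simp only [add_mul, mul_sub, one_mul, mul_one, smul_mul_assoc,
          mul_smul_comm, hsq, smul_smul]
        module
    _ = 1 := by rw [mul_inv_cancel₀ ha, hcoef, one_smul, zero_smul, add_zero]

end Matrix

section detEquivResolvent

variable {p : ℕ} {v : Fin p → ℝ} {δ γ : ℝ}

theorem isSymm_detEquivResolvent : (detEquivResolvent p v δ γ).IsSymm :=
  have hvv : (vecMulVec v v).IsSymm := transpose_vecMulVec v v
  ((hvv.add isSymm_one).smul _ |>.add (isSymm_one.smul _)).inv

theorem detEquivResolvent_eq (hδ : 1 + δ ≠ 0) (hγ : 1 + γ * (1 + δ) ≠ 0)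
    (hl : v ⬝ᵥ v + 1 + γ * (1 + δ) ≠ 0) :
    detEquivResolvent p v δ γ =
      ((1 + δ) / (1 + γ * (1 + δ))) • (1 - (v ⬝ᵥ v + 1 + γ * (1 + δ))⁻¹ • vecMulVec v v) := by
  have hrank : (1 + δ)⁻¹ • (vecMulVec v v + 1) + γ • (1 : Matrix (Fin p) (Fin p) ℝ) =
      ((1 + δ)⁻¹ + γ) • 1 + (1 + δ)⁻¹ • vecMulVec v v := by module
  have ha : (1 + δ)⁻¹ + γ = (1 + γ * (1 + δ)) / (1 + δ) := by field_simp
  have hab : (1 + δ)⁻¹ + γ + (1 + δ)⁻¹ * (v ⬝ᵥ v) = (v ⬝ᵥ v + 1 + γ * (1 + δ)) / (1 + δ) := by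
    field_simp
    ring
  rw [detEquivResolvent, hrank, inv_smul_one_add_smul_vecMulVec v v
    (by rw [ha]; exact div_ne_zero hγ hδ) (by rw [hab]; exact div_ne_zero hl hδ), hab, ha]
  congr 2 <;> field_simp

theorem detEquivResolvent_mulVec (hδ : 1 + δ ≠ 0) (hγ : 1 + γ * (1 + δ) ≠ 0)
    (hl : v ⬝ᵥ v + 1 + γ * (1 + δ) ≠ 0) (x : Fin p → ℝ) :
    detEquivResolvent p v δ γ *ᵥ x =
      ((1 + δ) / (1 + γ * (1 + δ))) • (x - ((v ⬝ᵥ x) / (v ⬝ᵥ v + 1 + γ * (1 + δ))) • v) := by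
  rw [detEquivResolvent_eq hδ hγ hl, smul_mulVec, sub_mulVec, one_mulVec, smul_mulVec,
    vecMulVec_mulVec, op_smul_eq_smul, smul_smul, inv_mul_eq_div]

theorem detEquivResolvent_mulVec_self (hδ : 1 + δ ≠ 0) (hγ : 1 + γ * (1 + δ) ≠ 0)
    (hl : v ⬝ᵥ v + 1 + γ * (1 + δ) ≠ 0) :
    detEquivResolvent p v δ γ *ᵥ v = ((1 + δ) / (v ⬝ᵥ v + 1 + γ * (1 + δ))) • v := by
  have hcoef : (1 + δ) / (1 + γ * (1 + δ)) * (1 - v ⬝ᵥ v / (v ⬝ᵥ v + 1 + γ * (1 + δ))) =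
      (1 + δ) / (v ⬝ᵥ v + 1 + γ * (1 + δ)) := by
    rw [one_sub_div hl, add_assoc, add_sub_cancel_left, div_mul_div_cancel₀ hγ]
  rw [detEquivResolvent_mulVec hδ hγ hl, ← hcoef, mul_smul, sub_smul, one_smul]

end detEquivResolvent

theorem sandwiched_quadratic_form_general
    (p : ℕ) (μ μperp : Fin p → ℝ) (horth : μ ⬝ᵥ μperp = 0)
    (β : ℝ) (δQ δR γ γt : ℝ) (hδQ : -1 < δQ) (hδR : -1 < δR) (hγ : 0 < γ) (hγt : 0 < γt) :
    μ ⬝ᵥ (detEquivResolvent p μ δR γt *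
        detEquivResolvent p (β • μ + μperp) δQ γ *
        detEquivResolvent p (β • μ + μperp) δQ γ *
        detEquivResolvent p μ δR γt).mulVec μ =
      ((1 + δR) * (1 + δQ) * Real.sqrt (μ ⬝ᵥ μ) /
          ((1 + γ * (1 + δQ)) * (μ ⬝ᵥ μ + 1 + γt * (1 + δR)))) ^ 2 *
        (1 +
          β ^ 2 * (μ ⬝ᵥ μ) * ((β • μ + μperp) ⬝ᵥ (β • μ + μperp)) /
            ((β • μ + μperp) ⬝ᵥ (β • μ + μperp) + 1 + γ * (1 + δQ)) ^ 2 -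
          2 * β ^ 2 * (μ ⬝ᵥ μ) /
            ((β • μ + μperp) ⬝ᵥ (β • μ + μperp) + 1 + γ * (1 + δQ))) := by
  set v := β • μ + μperp
  have hvμ : v ⬝ᵥ μ = β * (μ ⬝ᵥ μ) := by
    rw [add_dotProduct, smul_dotProduct, dotProduct_comm μperp, horth, smul_eq_mul, add_zero]
  have hδQ' : 0 < 1 + δQ := by linarith
  have hδR' : 0 < 1 + δR := by linarith
  have hγQ : 0 < 1 + γ * (1 + δQ) := by positivity
  have hγR : 0 < 1 + γt * (1 + δR) := by positivity
  have hs : 0 ≤ μ ⬝ᵥ μ := dotProduct_self_star_nonneg μ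
  have hv : 0 ≤ v ⬝ᵥ v := dotProduct_self_star_nonneg v
  have hlQ : 0 < v ⬝ᵥ v + 1 + γ * (1 + δQ) := by linarith
  have hlR : 0 < μ ⬝ᵥ μ + 1 + γt * (1 + δR) := by linarith
  rw [dotProduct_mul_mul_mul_mulVec_of_isSymm isSymm_detEquivResolvent isSymm_detEquivResolvent
      (detEquivResolvent_mulVec_self hδR'.ne' hγR.ne' hlR.ne'),
    detEquivResolvent_mulVec hδQ'.ne' hγQ.ne' hlQ.ne', hvμ]
  simp only [smul_dotProduct, dotProduct_smul, sub_dotProduct, dotProduct_sub,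
    dotProduct_comm μ v, hvμ, smul_eq_mul, div_pow, mul_pow, Real.sq_sqrt hs]
  field_simp
  ring

/-- with `μ_β = β μ + μ⊥` (`⟨μ, μ⊥⟩ = 0`),
`Q̄ = ((μ_β μ_βᵀ + I)/(1+δ_Q) + γ I)⁻¹`, `R̄ = ((μ μᵀ + I)/(1+δ_R) + γ̃ I)⁻¹`,
`λ_Q = ‖μ_β‖² + 1 + γ(1+δ_Q)`, `λ_R = ‖μ‖² + 1 + γ̃(1+δ_R)`, the sandwiched quadratic form
satisfies `μᵀ R̄ Q̄² R̄ μ = ((1+δ_R)(1+δ_Q)‖μ‖/((1+γ(1+δ_Q)) λ_R))² ·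
(1 + β² ‖μ‖² ‖μ_β‖²/λ_Q² − 2 β² ‖μ‖²/λ_Q)`. -/
theorem sandwiched_quadratic_form
    (p : ℕ) (hp : 1 ≤ p) (μ μperp : Fin p → ℝ) (horth : μ ⬝ᵥ μperp = 0)
    (β : ℝ) (δQ δR γ γt : ℝ) (hδQ : -1 < δQ) (hδR : -1 < δR) (hγ : 0 < γ) (hγt : 0 < γt) :
    μ ⬝ᵥ (detEquivResolvent p μ δR γt *
        detEquivResolvent p (β • μ + μperp) δQ γ *
        detEquivResolvent p (β • μ + μperp) δQ γ *
        detEquivResolvent p μ δR γt).mulVec μ =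
      ((1 + δR) * (1 + δQ) * Real.sqrt (μ ⬝ᵥ μ) /
          ((1 + γ * (1 + δQ)) * (μ ⬝ᵥ μ + 1 + γt * (1 + δR)))) ^ 2 *
        (1 +
          β ^ 2 * (μ ⬝ᵥ μ) * ((β • μ + μperp) ⬝ᵥ (β • μ + μperp)) /
            ((β • μ + μperp) ⬝ᵥ (β • μ + μperp) + 1 + γ * (1 + δQ)) ^ 2 -
          2 * β ^ 2 * (μ ⬝ᵥ μ) /
            ((β • μ + μperp) ⬝ᵥ (β • μ + μperp) + 1 + γ * (1 + δQ))) :=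
  sandwiched_quadratic_form_general p μ μperp horth β δQ δR γ γt hδQ hδR hγ hγt
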